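/- arXiv:1512.04488 — 3 statements merged into one kernel-verified Lean document; each statement's English description precedes it below -/
import Mathlib

section
/- Let A be a symmetric negative-definite m×m real matrix with eigenvalues 0 > λ₁ ≥ ... ≥ λ_m, set ρ = |λ_m|, and let Δt satisfy 0 < Δt ≤ 1/ρ. Let α satisfy 0 < α < |λ₁| and αΔt < 1. Then the matrix ((I + AΔt)/(1 - αΔt) - I)((I + AΔt)/(1 - αΔt) + I) is negative semidefinite. -/
open Matrix

/-- Let `A` be symmetric with eigenvalues `0 > λ₁ ≥ ... ≥ λ_m`,
`ρ = |λ_m|` (so every eigenvalue satisfies `-ρ ≤ λᵢ`), `0 < Δt ≤ 1/ρ`,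
and `0 < α < |λ₁|` (i.e. `α < -λᵢ` for all `i`) with `α·Δt < 1`. Then
`((I + Δt·A)/(1 - α·Δt) - I) * ((I + Δt·A)/(1 - α·Δt) + I)` is negative
semidefinite. -/
theorem stmt1 {m : ℕ} (A : Matrix (Fin m) (Fin m) ℝ) (hA : A.IsHermitian)
    (hneg : ∀ i, hA.eigenvalues i < 0)
    (ρ : ℝ) (hρ : ∀ i, -ρ ≤ hA.eigenvalues i)
    (Δt : ℝ) (hΔt0 : 0 < Δt) (hΔtρ : Δt ≤ 1 / ρ)
    (α : ℝ) (hα0 : 0 < α) (hα1 : ∀ i, α < -hA.eigenvalues i) (hαΔt : α * Δt < 1) :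
    (-(((1 - α * Δt)⁻¹ • ((1 : Matrix (Fin m) (Fin m) ℝ) + Δt • A) - 1) *
        ((1 - α * Δt)⁻¹ • ((1 : Matrix (Fin m) (Fin m) ℝ) + Δt • A) + 1))).PosSemidef := by
  set c : ℝ := (1 - α * Δt)⁻¹ with hc
  set V : Matrix (Fin m) (Fin m) ℝ := (hA.eigenvectorUnitary : Matrix (Fin m) (Fin m) ℝ)
    with hV
  have hVV : V * star V = 1 := (Matrix.mem_unitaryGroup_iff).mp hA.eigenvectorUnitary.2
  have hVV' : star V * V = 1 := (Matrix.mem_unitaryGroup_iff').mp hA.eigenvectorUnitary.2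
  set D : Matrix (Fin m) (Fin m) ℝ := diagonal (RCLike.ofReal ∘ hA.eigenvalues) with hD
  have hAspec : A = V * D * star V := hA.spectral_theorem
  set e : Fin m → ℝ := fun i => c * (1 + Δt * hA.eigenvalues i) with he
  set d : Fin m → ℝ := fun i => 1 - (c * (1 + Δt * hA.eigenvalues i))^2 with hd
  set E : Matrix (Fin m) (Fin m) ℝ := c • ((1 : Matrix (Fin m) (Fin m) ℝ) + Δt • D) with hE
  have hEdiag : E = diagonal e := by
    rw [hE]
    ext i j
    rcases eq_or_ne i j with h | h
    · subst h
      simp [hD, he, Matrix.diagonal_apply_eq, Matrix.one_apply_eq, mul_add]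
    · simp [hD, he, Matrix.diagonal_apply_ne _ h, Matrix.one_apply_ne h]
  set B : Matrix (Fin m) (Fin m) ℝ := c • ((1 : Matrix (Fin m) (Fin m) ℝ) + Δt • A) with hB
  have e1 : V * E * star V = c • (V * ((1 : Matrix (Fin m) (Fin m) ℝ) + Δt • D) * star V) := by
    rw [hE, Matrix.mul_smul, Matrix.smul_mul]
  have e2 : V * ((1 : Matrix (Fin m) (Fin m) ℝ) + Δt • D) * star V
      = V * star V + Δt • (V * D * star V) := by
    rw [Matrix.mul_add, Matrix.mul_one, Matrix.add_mul, Matrix.mul_smul, Matrix.smul_mul]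
  have hBdiag : B = V * E * star V := by
    rw [hB, e1, e2, hVV, ← hAspec]
  have hmul : (V * E * star V) * (V * E * star V) = V * (E * E) * star V := by
    calc (V * E * star V) * (V * E * star V)
        = V * E * (star V * V) * E * star V := by simp only [Matrix.mul_assoc]
      _ = V * (E * E) * star V := by
          rw [hVV', Matrix.mul_one]; simp only [Matrix.mul_assoc]
  have hdiag2 : (1 : Matrix (Fin m) (Fin m) ℝ) - E * E = diagonal d := by
    rw [hEdiag, Matrix.diagonal_mul_diagonal]
    ext i j
    rcases eq_or_ne i j with h | h
    · subst h
      simp [Matrix.diagonal_apply_eq, Matrix.one_apply_eq, hd, he, sq]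
    · simp [Matrix.diagonal_apply_ne _ h, Matrix.one_apply_ne h]
  have key : -((B - 1) * (B + 1)) = V * diagonal d * star V := by
    have hmain : -((B - 1) * (B + 1)) = 1 - B * B := by noncomm_ring
    rw [hmain, hBdiag, hmul, ← hVV, ← Matrix.mul_one (V * star V)]
    calc V * star V * 1 - V * (E * E) * star V
        = V * 1 * star V - V * (E * E) * star V := by
          simp only [Matrix.mul_assoc, Matrix.mul_one, Matrix.one_mul]
      _ = V * ((1 : Matrix (Fin m) (Fin m) ℝ) - E * E) * star V := by
          rw [Matrix.mul_sub, Matrix.sub_mul]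
      _ = V * diagonal d * star V := by rw [hdiag2]
  rw [key]
  apply Matrix.PosSemidef.mul_mul_conjTranspose_same
  refine Matrix.posSemidef_diagonal_iff.mpr fun i => ?_
  have h1 := hneg i
  have h2 := hρ i
  have h3 := hα1 i
  have hρ0 : 0 < ρ := by linarith
  have hΔρ : Δt * ρ ≤ 1 := by
    rw [div_eq_inv_mul, mul_one] at hΔtρ
    calc Δt * ρ ≤ ρ⁻¹ * ρ := mul_le_mul_of_nonneg_right hΔtρ hρ0.le
      _ = 1 := inv_mul_cancel₀ hρ0.ne'
  have hnum0 : 0 ≤ 1 + Δt * hA.eigenvalues i := by nlinarith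
  have hnum1 : 1 + Δt * hA.eigenvalues i ≤ 1 - α * Δt := by nlinarith
  have hden : 0 < 1 - α * Δt := by linarith
  have hcnum : 0 ≤ c * (1 + Δt * hA.eigenvalues i) := by positivity
  have hcnum1 : c * (1 + Δt * hA.eigenvalues i) ≤ 1 := by
    rw [hc, inv_mul_le_iff₀ hden]
    linarith
  show 0 ≤ 1 - (c * (1 + Δt * hA.eigenvalues i))^2
  nlinarith [hcnum, hcnum1]
end

section
/- Let A be a symmetric negative-definite m×m real matrix with eigenvalues 0 > λ₁ ≥ ... ≥ λ_m, and let t₁ ≥ t₂. Then ∫_{-∞}^{t₂} |(e^{At₁} − e^{At₂}) e^{-As}|² ds ≤ (Tr(−A)/2)(t₁ − t₂)², where |·| denotes the Frobenius norm. -/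
/-!
Diagonalise `A = U D Uᵀ` with `U` orthogonal. Conjugation by `U` commutes with the exponential
and preserves the Frobenius norm, so the integrand is `∑ᵢ (e^{t₁λᵢ} − e^{t₂λᵢ})² e^{−2λᵢ s}`.
Integrating over `s ≤ t₂` gives `∑ᵢ (e^{(t₁−t₂)λᵢ} − 1)² / (−2λᵢ)`, and `|e^x − 1| ≤ |x|` for
`x ≤ 0` bounds the `i`-th term by `−λᵢ (t₁ − t₂)² / 2`; summing gives `Tr(−A)/2 · (t₁ − t₂)²`.
-/

open Matrix NormedSpace MeasureTheory

/-- The Frobenius norm of a real matrix. -/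
noncomputable def frobNorm {m : ℕ} (B : Matrix (Fin m) (Fin m) ℝ) : ℝ :=
  Real.sqrt (∑ i, ∑ j, B i j ^ 2)

open Unitary

section Conjugation

variable {n : Type*} [Fintype n] [DecidableEq n]

theorem trace_conjStarAlgAut {R : Type*} [CommRing R] [StarRing R] (U : unitary (Matrix n n R))
    (X : Matrix n n R) : trace (conjStarAlgAut R _ U X) = trace X := by
  rw [conjStarAlgAut_apply, trace_mul_cycle, Unitary.coe_star_mul_self, Matrix.one_mul]

open scoped Norms.Operator in
theorem exp_conjStarAlgAut (U : unitary (Matrix n n ℝ)) (X : Matrix n n ℝ) :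
    exp (conjStarAlgAut ℝ _ U X) = conjStarAlgAut ℝ _ U (exp X) :=
  (map_exp (conjStarAlgAut ℝ (Matrix n n ℝ) U) (LinearMap.continuous_of_finiteDimensional
    (conjStarAlgAut ℝ (Matrix n n ℝ) U).toAlgEquiv.toLinearMap) X).symm

theorem Matrix.IsHermitian.exp_smul_eq {A : Matrix n n ℝ} (hA : A.IsHermitian) (t : ℝ) :
    NormedSpace.exp (t • A) = conjStarAlgAut ℝ _ hA.eigenvectorUnitary
      (diagonal fun i => Real.exp (t * hA.eigenvalues i)) := by
  conv_lhs => rw [hA.spectral_theorem]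
  rw [← map_smul, exp_conjStarAlgAut, ← diagonal_smul, exp_diagonal]
  congr 2
  ext i
  simp [Real.exp_eq_exp_ℝ]

end Conjugation

section FrobeniusNorm

variable {m : ℕ}

theorem frobNorm_eq_sqrt_trace (B : Matrix (Fin m) (Fin m) ℝ) :
    frobNorm B = √(trace (B * star B)) := by
  simp [frobNorm, trace, mul_apply, sq]

theorem frobNorm_conjStarAlgAut (U : unitary (Matrix (Fin m) (Fin m) ℝ))
    (B : Matrix (Fin m) (Fin m) ℝ) : frobNorm (conjStarAlgAut ℝ _ U B) = frobNorm B := by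
  rw [frobNorm_eq_sqrt_trace, frobNorm_eq_sqrt_trace, ← map_star, ← map_mul,
    trace_conjStarAlgAut]

theorem frobNorm_diagonal_sq (d : Fin m → ℝ) : frobNorm (diagonal d) ^ 2 = ∑ i, d i ^ 2 := by
  rw [frobNorm, Real.sq_sqrt (by positivity)]
  simp [diagonal_apply, apply_ite (· ^ 2)]

theorem Matrix.IsHermitian.frobNorm_sq_exp_sub_exp_mul_exp {A : Matrix (Fin m) (Fin m) ℝ}
    (hA : A.IsHermitian) (t₁ t₂ s : ℝ) :
    frobNorm ((NormedSpace.exp (t₁ • A) - NormedSpace.exp (t₂ • A)) *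
        NormedSpace.exp ((-s) • A)) ^ 2 =
      ∑ i, ((Real.exp (t₁ * hA.eigenvalues i) - Real.exp (t₂ * hA.eigenvalues i)) *
        Real.exp (-s * hA.eigenvalues i)) ^ 2 := by
  rw [hA.exp_smul_eq, hA.exp_smul_eq, hA.exp_smul_eq, ← map_sub, ← map_mul,
    frobNorm_conjStarAlgAut, diagonal_sub, diagonal_mul_diagonal, frobNorm_diagonal_sq]

end FrobeniusNorm

theorem sq_exp_sub_one_le_sq {x : ℝ} (hx : x ≤ 0) : (Real.exp x - 1) ^ 2 ≤ x ^ 2 := by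
  have hlow := Real.add_one_le_exp x
  have hle_one : Real.exp x ≤ 1 := Real.exp_le_one_iff.mpr hx
  nlinarith

theorem sq_exp_sub_exp_mul_exp (μ t₁ t₂ s : ℝ) :
    ((Real.exp (t₁ * μ) - Real.exp (t₂ * μ)) * Real.exp (-s * μ)) ^ 2 =
      (Real.exp (t₁ * μ) - Real.exp (t₂ * μ)) ^ 2 * Real.exp (-2 * μ * s) := by
  rw [mul_pow, ← Real.exp_nat_mul]
  congr 2
  push_cast
  ring

theorem integrableOn_Iic_sq_exp_sub_exp_mul_exp {μ : ℝ} (hμ : μ < 0) (t₁ t₂ : ℝ) :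
    IntegrableOn (fun s => ((Real.exp (t₁ * μ) - Real.exp (t₂ * μ)) * Real.exp (-s * μ)) ^ 2)
      (Set.Iic t₂) := by
  simp_rw [sq_exp_sub_exp_mul_exp]
  exact (integrableOn_exp_mul_Iic (by linarith) t₂).const_mul _

theorem integral_Iic_sq_exp_sub_exp_mul_exp_le {μ t₁ t₂ : ℝ} (hμ : μ < 0) (h₁₂ : t₂ ≤ t₁) :
    ∫ s in Set.Iic t₂, ((Real.exp (t₁ * μ) - Real.exp (t₂ * μ)) * Real.exp (-s * μ)) ^ 2 ≤
      -μ / 2 * (t₁ - t₂) ^ 2 := by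
  have hb : 0 < -2 * μ := by linarith
  have hshift : (Real.exp (t₁ * μ) - Real.exp (t₂ * μ)) ^ 2 * Real.exp (-2 * μ * t₂) =
      (Real.exp ((t₁ - t₂) * μ) - 1) ^ 2 := by
    rw [← sq_exp_sub_exp_mul_exp, sub_mul, ← Real.exp_add, ← Real.exp_add, ← Real.exp_zero]
    congr 3 <;> ring
  simp_rw [sq_exp_sub_exp_mul_exp]
  rw [integral_const_mul, integral_exp_mul_Iic hb, ← mul_div_assoc, hshift, div_le_iff₀ hb]
  calc (Real.exp ((t₁ - t₂) * μ) - 1) ^ 2 ≤ ((t₁ - t₂) * μ) ^ 2 :=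
        sq_exp_sub_one_le_sq (mul_nonpos_of_nonneg_of_nonpos (by linarith) hμ.le)
    _ = -μ / 2 * (t₁ - t₂) ^ 2 * (-2 * μ) := by ring

/-- For `A` symmetric negative definite (all eigenvalues negative)
and `t₁ ≥ t₂`,
`∫_{-∞}^{t₂} |(e^{A t₁} − e^{A t₂}) e^{-A s}|² ds ≤ (Tr(−A)/2)·(t₁ − t₂)²`. -/
theorem stmt3 {m : ℕ} (A : Matrix (Fin m) (Fin m) ℝ) (hA : A.IsHermitian)
    (hneg : ∀ i, hA.eigenvalues i < 0) (t₁ t₂ : ℝ) (h₁₂ : t₂ ≤ t₁) :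
    ∫ s in Set.Iic t₂,
        frobNorm ((exp (t₁ • A) - exp (t₂ • A)) * exp ((-s) • A)) ^ 2 ≤
      (Matrix.trace (-A) / 2) * (t₁ - t₂) ^ 2 := by
  simp_rw [hA.frobNorm_sq_exp_sub_exp_mul_exp]
  rw [integral_finsetSum _ fun i _ => integrableOn_Iic_sq_exp_sub_exp_mul_exp (hneg i) t₁ t₂]
  calc _ ≤ ∑ i, -hA.eigenvalues i / 2 * (t₁ - t₂) ^ 2 :=
        Finset.sum_le_sum fun i _ => integral_Iic_sq_exp_sub_exp_mul_exp_le (hneg i) h₁₂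
    _ = trace (-A) / 2 * (t₁ - t₂) ^ 2 := by
        rw [trace_neg, hA.trace_eq_sum_eigenvalues, ← Finset.sum_mul, ← Finset.sum_div,
          Finset.sum_neg_distrib]
        simp
end

section
/- (Discrete Gronwall-type uniform bound) Let (y_M)_{M≥0} be a sequence of nonnegative reals, let 0 < r < 1, K₁, K₂ ≥ 0 and K₃ > 0 satisfy r·(1 + K₃) < 1, and suppose that for all M ≥ 0, r^{-M} y_M ≤ K₁ + K₂ r^{-M} + K₃ Σ_{i=0}^{M−1} r^{-i} y_i. Then for all M ≥ 0, y_M ≤ K₁ + K₂ + K₂K₃ r / (1 − r(1+K₃)). -/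
/-!
The bound `B = K₁ + K₂ + K₂ K₃ r / (1 - r(1 + K₃))` propagates by strong induction. If `y i ≤ B`
for all `i < M`, multiplying the recursion by `r ^ M` gives
`y M ≤ K₁ r ^ M + K₂ + K₃ B (r + ⋯ + r ^ M) = K₁ r ^ M + K₂ + K₃ B r (1 - r ^ M) / (1 - r)`,
and the condition `r (1 + K₃) < 1`, i.e. `K₃ r / (1 - r) < 1`, makes the right-hand side at most `B`.
-/

open Finset

lemma pow_mul_sum_range_inv_pow {r : ℝ} (hr0 : r ≠ 0) (hr1 : r ≠ 1) (M : ℕ) :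
    r ^ M * ∑ i ∈ range M, (r ^ i)⁻¹ = r * (1 - r ^ M) / (1 - r) := by
  have hinv : r⁻¹ ≠ 1 := by rwa [Ne, inv_eq_one]
  have : 1 - r ≠ 0 := sub_ne_zero.mpr hr1.symm
  simp only [← inv_pow, geom_sum_eq hinv]
  rw [inv_pow]
  field_simp

lemma le_of_forall_lt_le_of_weighted_sum_le {y : ℕ → ℝ} {r K₁ K₂ K₃ B : ℝ}
    (hr0 : 0 < r) (hr1 : r < 1) (hK₃ : 0 ≤ K₃) {M : ℕ}
    (hrec : (r ^ M)⁻¹ * y M ≤ K₁ + K₂ * (r ^ M)⁻¹ + K₃ * ∑ i ∈ range M, (r ^ i)⁻¹ * y i)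
    (hprev : ∀ i < M, y i ≤ B) :
    y M ≤ K₁ * r ^ M + K₂ + K₃ * B * (r * (1 - r ^ M) / (1 - r)) := by
  have hrM : 0 < r ^ M := pow_pos hr0 M
  have hsum : ∑ i ∈ range M, (r ^ i)⁻¹ * y i ≤ B * ∑ i ∈ range M, (r ^ i)⁻¹ := by
    rw [mul_sum]
    refine sum_le_sum fun i hi => ?_
    rw [mul_comm B]
    exact mul_le_mul_of_nonneg_left (hprev i (mem_range.mp hi)) (by positivity)
  calc y M = r ^ M * ((r ^ M)⁻¹ * y M) := by field_simp
    _ ≤ r ^ M * (K₁ + K₂ * (r ^ M)⁻¹ + K₃ * (B * ∑ i ∈ range M, (r ^ i)⁻¹)) := by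
      gcongr
      exact hrec.trans (by gcongr)
    _ = K₁ * r ^ M + K₂ + K₃ * B * (r ^ M * ∑ i ∈ range M, (r ^ i)⁻¹) := by
      field_simp
    _ = K₁ * r ^ M + K₂ + K₃ * B * (r * (1 - r ^ M) / (1 - r)) := by
      rw [pow_mul_sum_range_inv_pow hr0.ne' hr1.ne]

lemma gronwall_bound_absorbs {r K₁ K₂ K₃ t : ℝ} (hr0 : 0 < r) (hr1 : r < 1) (hK₁ : 0 ≤ K₁)
    (hK₂ : 0 ≤ K₂) (hK₃ : 0 ≤ K₃) (hrK : r * (1 + K₃) < 1) (ht0 : 0 ≤ t) (ht1 : t ≤ 1) :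
    K₁ * t + K₂ + K₃ * (K₁ + K₂ + K₂ * K₃ * r / (1 - r * (1 + K₃))) * (r * (1 - t) / (1 - r))
      ≤ K₁ + K₂ + K₂ * K₃ * r / (1 - r * (1 + K₃)) := by
  have hq : 0 < 1 - r * (1 + K₃) := by linarith
  set D := K₂ * (1 - r) / (1 - r * (1 + K₃)) with hD_def
  have hB : K₁ + K₂ + K₂ * K₃ * r / (1 - r * (1 + K₃)) = K₁ + D := by
    rw [hD_def]; field_simp; ring
  have hD : D * (1 - r * (1 + K₃)) = K₂ * (1 - r) := by
    rw [hD_def]; field_simp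
  have hD0 : 0 ≤ D := div_nonneg (mul_nonneg hK₂ (by linarith)) hq.le
  -- after clearing `1 - r`, the slack is `K₁ (1 - t) (1 - r (1 + K₃)) + D K₃ r t ≥ 0`
  rw [hB, mul_div_assoc', ← le_sub_iff_add_le', div_le_iff₀ (by linarith)]
  nlinarith [mul_nonneg (mul_nonneg hK₁ (sub_nonneg.mpr ht1)) hq.le,
    mul_nonneg (mul_nonneg (mul_nonneg hD0 hK₃) hr0.le) ht0]

theorem stmt6_general (y : ℕ → ℝ) (r K₁ K₂ K₃ : ℝ)
    (hr0 : 0 < r) (hr1 : r < 1) (hK₁ : 0 ≤ K₁) (hK₂ : 0 ≤ K₂) (hK₃ : 0 < K₃)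
    (hrK : r * (1 + K₃) < 1)
    (hrec : ∀ M, (r ^ M)⁻¹ * y M ≤
      K₁ + K₂ * (r ^ M)⁻¹ + K₃ * ∑ i ∈ Finset.range M, (r ^ i)⁻¹ * y i) :
    ∀ M, y M ≤ K₁ + K₂ + K₂ * K₃ * r / (1 - r * (1 + K₃)) := by
  intro M
  induction M using Nat.strong_induction_on with
  | _ M ih =>
    exact (le_of_forall_lt_le_of_weighted_sum_le hr0 hr1 hK₃.le (hrec M) ih).trans <|
      gronwall_bound_absorbs hr0 hr1 hK₁ hK₂ hK₃.le hrK (pow_nonneg hr0.le M)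
        (pow_le_one₀ hr0.le hr1.le)

/-- (Discrete Gronwall-type uniform bound) If `0 < r < 1`,
`K₁, K₂ ≥ 0`, `K₃ > 0` with `r(1+K₃) < 1`, and the nonnegative sequence `(y_M)`
satisfies `r^{-M} y_M ≤ K₁ + K₂ r^{-M} + K₃ Σ_{i<M} r^{-i} y_i` for all `M`, then
`y_M ≤ K₁ + K₂ + K₂ K₃ r / (1 − r(1+K₃))` for all `M`. -/
theorem stmt6 (y : ℕ → ℝ) (hy : ∀ M, 0 ≤ y M) (r K₁ K₂ K₃ : ℝ)
    (hr0 : 0 < r) (hr1 : r < 1) (hK₁ : 0 ≤ K₁) (hK₂ : 0 ≤ K₂) (hK₃ : 0 < K₃)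
    (hrK : r * (1 + K₃) < 1)
    (hrec : ∀ M, (r ^ M)⁻¹ * y M ≤
      K₁ + K₂ * (r ^ M)⁻¹ + K₃ * ∑ i ∈ Finset.range M, (r ^ i)⁻¹ * y i) :
    ∀ M, y M ≤ K₁ + K₂ + K₂ * K₃ * r / (1 - r * (1 + K₃)) :=
  stmt6_general y r K₁ K₂ K₃ hr0 hr1 hK₁ hK₂ hK₃ hrK hrec
end
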